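/- arXiv:1507.02362 — 7 statements merged into one kernel-verified Lean document; each statement's English description precedes it below -/
import Mathlib

section
/- Let k ≥ 2, 0 ≤ ℓ ≤ k-1, j ∈ {0,1,...,ℓ+1}, and n ≡ ℓ (mod k). Let V be a vertex set of size n partitioned as V = V₁ ∪ V₂ with |V₁| ≡ ⌊n/k⌋·j + ℓ + 1 (mod ℓ+2). Let H be the k-uniform hypergraph on V whose edges are all k-subsets e with |e ∩ V₁| ≡ j (mod ℓ+2). Then H contains no matching of size ⌊n/k⌋. -/
/-- Divisibility barrier construction: the hypergraph whose edges are the `k`-subsets `e`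
of `V = V₁ ∪ V₂` with `|e ∩ V₁| ≡ j (mod ℓ+2)` has no matching of size `⌊n/k⌋`,
when `|V₁| ≡ ⌊n/k⌋·j + ℓ + 1 (mod ℓ+2)` and `n ≡ ℓ (mod k)`. -/
theorem stmt_0 {α : Type*} [DecidableEq α] (k ℓ j n : ℕ)
    (hk : 2 ≤ k) (hℓ : ℓ ≤ k - 1) (hj : j ≤ ℓ + 1) (hn : n % k = ℓ)
    (V V₁ V₂ : Finset α) (hV : V.card = n)
    (hpart : V₁ ∪ V₂ = V) (hdisj : Disjoint V₁ V₂)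
    (hV₁ : V₁.card % (ℓ + 2) = (n / k * j + ℓ + 1) % (ℓ + 2)) :
    ¬ ∃ M : Finset (Finset α),
      (∀ e ∈ M, e ⊆ V ∧ e.card = k ∧ (e ∩ V₁).card % (ℓ + 2) = j % (ℓ + 2)) ∧
      (∀ e ∈ M, ∀ f ∈ M, e ≠ f → Disjoint e f) ∧
      M.card = n / k := by
  rintro ⟨M, hM1, hM2, hM3⟩
  set m := n / k with hm
  have hdisj' : ∀ e ∈ M, ∀ f ∈ M, e ≠ f → Disjoint (e ∩ V₁) (f ∩ V₁) :=
    fun e he f hf hef => (hM2 e he f hf hef).mono inf_le_left inf_le_left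
  set U := M.biUnion (fun e => e) with hU
  have hUV : U ⊆ V := by
    intro x hx
    rw [hU, Finset.mem_biUnion] at hx
    obtain ⟨e, he, hxe⟩ := hx
    exact (hM1 e he).1 hxe
  have hUcard : U.card = m * k := by
    rw [hU, Finset.card_biUnion hM2,
      Finset.sum_congr rfl (fun e he => (hM1 e he).2.1)]
    simp [hM3]
  have hinter : V₁ ∩ U = M.biUnion (fun e => e ∩ V₁) := by
    ext x
    simp only [hU, Finset.mem_inter, Finset.mem_biUnion]
    tauto
  have hmod : Nat.ModEq (ℓ + 2) ((V₁ ∩ U).card) (m * j) := by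
    show (V₁ ∩ U).card % (ℓ + 2) = (m * j) % (ℓ + 2)
    rw [hinter, Finset.card_biUnion hdisj', Finset.sum_nat_mod,
      Finset.sum_congr rfl (fun e he => (hM1 e he).2.2), ← Finset.sum_nat_mod]
    simp [hM3, mul_comm]
  set r := (V₁ \ U).card with hr
  have hsplit : V₁.card = (V₁ ∩ U).card + r :=
    (Finset.card_inter_add_card_sdiff V₁ U).symm
  have hrle : r ≤ ℓ := by
    have h1 : V₁ \ U ⊆ V \ U :=
      Finset.sdiff_subset_sdiff (by rw [← hpart]; exact Finset.subset_union_left) le_rfl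
    have h2 := Finset.card_le_card h1
    rw [Finset.card_sdiff_of_subset hUV, hV, hUcard] at h2
    have h3 := Nat.mod_add_div n k
    have h4 : m * k = k * (n / k) := by rw [hm, mul_comm]
    omega
  have h2 : Nat.ModEq (ℓ + 2) (m * j + r) (m * j + (ℓ + 1)) := by
    calc m * j + r ≡ (V₁ ∩ U).card + r [MOD ℓ + 2] := (hmod.add_right r).symm
      _ = V₁.card := hsplit.symm
      _ ≡ m * j + (ℓ + 1) [MOD ℓ + 2] := by
          show V₁.card % (ℓ + 2) = (m * j + (ℓ + 1)) % (ℓ + 2)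
          rw [hV₁, Nat.add_assoc]
  have hcancel : r % (ℓ + 2) = (ℓ + 1) % (ℓ + 2) :=
    Nat.ModEq.add_left_cancel' (m * j) h2
  rw [Nat.mod_eq_of_lt (by omega), Nat.mod_eq_of_lt (by omega)] at hcancel
  omega
end

section
/- Let m ≥ 1 be an integer. For i = 0, 1, 2 let Cᵢ = Σ_{j ≡ i (mod 3), 0 ≤ j ≤ m} C(m,j). Then min{C₀, C₁, C₂} = ⌊2^m / 3⌋. -/
open Finset

def F (m i : ℕ) : ℕ := ∑ j ∈ range (m+1), if j % 3 = i then m.choose j else 0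

lemma F_sum (m : ℕ) : F m 0 + F m 1 + F m 2 = 2 ^ m := by
  unfold F
  rw [← Finset.sum_add_distrib, ← Finset.sum_add_distrib, ← Nat.sum_range_choose m]
  apply Finset.sum_congr rfl
  intro j _
  have : j % 3 = 0 ∨ j % 3 = 1 ∨ j % 3 = 2 := by omega
  rcases this with h|h|h <;> simp [h]

lemma F_succ (m i : ℕ) (hi : i < 3) :
    F (m+1) i = F m i + F m ((i+2) % 3) := by
  unfold F
  rw [Finset.sum_range_succ' (fun j => if j % 3 = i then (m+1).choose j else 0) (m+1),
      Finset.sum_range_succ' (fun j => if j % 3 = i then m.choose j else 0) m]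
  have h1 : ∀ j, (if (j+1) % 3 = i then (m+1).choose (j+1) else 0)
      = (if j % 3 = (i+2) % 3 then m.choose j else 0)
        + (if (j+1) % 3 = i then m.choose (j+1) else 0) := by
    intro j
    have hc : (m+1).choose (j+1) = m.choose j + m.choose (j+1) := Nat.choose_succ_succ m j
    have hiff : (j+1) % 3 = i ↔ j % 3 = (i+2) % 3 := by omega
    by_cases h : (j+1) % 3 = i
    · rw [if_pos h, if_pos (hiff.mp h), if_pos h, hc]
    · rw [if_neg h, if_neg (fun hh => h (hiff.mpr hh)), if_neg h]
  simp only [h1]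
  rw [Finset.sum_add_distrib,
      Finset.sum_range_succ (fun j => if (j+1) % 3 = i then m.choose (j+1) else 0) m]
  have hz : m.choose (m+1) = 0 := Nat.choose_eq_zero_of_lt (by omega)
  rw [hz]
  simp only [Nat.choose_zero_right, ite_self, add_zero]
  omega

lemma key (m : ℕ) (hm : 1 ≤ m) :
    ((F m 0 : ℤ) - F m 1 = 0 ∧ (F m 1 : ℤ) - F m 2 = 1 ∧ (F m 2 : ℤ) - F m 0 = -1) ∨
    ((F m 0 : ℤ) - F m 1 = -1 ∧ (F m 1 : ℤ) - F m 2 = 1 ∧ (F m 2 : ℤ) - F m 0 = 0) ∨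
    ((F m 0 : ℤ) - F m 1 = -1 ∧ (F m 1 : ℤ) - F m 2 = 0 ∧ (F m 2 : ℤ) - F m 0 = 1) ∨
    ((F m 0 : ℤ) - F m 1 = 0 ∧ (F m 1 : ℤ) - F m 2 = -1 ∧ (F m 2 : ℤ) - F m 0 = 1) ∨
    ((F m 0 : ℤ) - F m 1 = 1 ∧ (F m 1 : ℤ) - F m 2 = -1 ∧ (F m 2 : ℤ) - F m 0 = 0) ∨
    ((F m 0 : ℤ) - F m 1 = 1 ∧ (F m 1 : ℤ) - F m 2 = 0 ∧ (F m 2 : ℤ) - F m 0 = -1) := by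
  induction m with
  | zero => omega
  | succ n ih =>
    rcases Nat.eq_zero_or_pos n with hn | hn
    · subst hn
      have h0 : F 1 0 = 1 := by simp [F, Finset.sum_range_succ]
      have h1 : F 1 1 = 1 := by simp [F, Finset.sum_range_succ]
      have h2 : F 1 2 = 0 := by simp [F, Finset.sum_range_succ]
      rw [h0, h1, h2]; norm_num
    · have ih := ih hn
      have e0 := F_succ n 0 (by norm_num)
      have e1 := F_succ n 1 (by norm_num)
      have e2 := F_succ n 2 (by norm_num)
      norm_num at e0 e1 e2
      rw [e0, e1, e2]
      push_cast
      clear e0 e1 e2 hn hm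
      generalize (F n 0 : ℤ) = a at *
      generalize (F n 1 : ℤ) = b at *
      generalize (F n 2 : ℤ) = c at *
      rcases ih with h|h|h|h|h|h
      · exact Or.inr (Or.inl ⟨by omega, by omega, by omega⟩)
      · exact Or.inr (Or.inr (Or.inl ⟨by omega, by omega, by omega⟩))
      · exact Or.inr (Or.inr (Or.inr (Or.inl ⟨by omega, by omega, by omega⟩)))
      · exact Or.inr (Or.inr (Or.inr (Or.inr (Or.inl ⟨by omega, by omega, by omega⟩))))
      · exact Or.inr (Or.inr (Or.inr (Or.inr (Or.inr ⟨by omega, by omega, by omega⟩))))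
      · exact Or.inl ⟨by omega, by omega, by omega⟩

/-- If `Cᵢ = ∑_{j ≡ i (mod 3), 0 ≤ j ≤ m} C(m,j)`, then
`min{C₀, C₁, C₂} = ⌊2^m / 3⌋`. -/
theorem stmt_3 (m : ℕ) (hm : 1 ≤ m) :
    min (min (∑ j ∈ (range (m + 1)).filter (fun j => j % 3 = 0), m.choose j)
          (∑ j ∈ (range (m + 1)).filter (fun j => j % 3 = 1), m.choose j))
        (∑ j ∈ (range (m + 1)).filter (fun j => j % 3 = 2), m.choose j)
      = 2 ^ m / 3 := by
  have h0 : (∑ j ∈ (range (m + 1)).filter (fun j => j % 3 = 0), m.choose j) = F m 0 := by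
    rw [F, Finset.sum_filter]
  have h1 : (∑ j ∈ (range (m + 1)).filter (fun j => j % 3 = 1), m.choose j) = F m 1 := by
    rw [F, Finset.sum_filter]
  have h2 : (∑ j ∈ (range (m + 1)).filter (fun j => j % 3 = 2), m.choose j) = F m 2 := by
    rw [F, Finset.sum_filter]
  rw [h0, h1, h2]
  have hsum := F_sum m
  have hq := key m hm
  omega
end

section
/- Let m ≥ 1 be an integer. There is no real x ∈ [0,1] such that all three of the sums hᵢ(x) = Σ_{j ≡ i (mod 3), 0 ≤ j ≤ m} C(m,j)·x^j·(1-x)^{m-j}, for i = 0, 1, 2, are equal to 1/3. -/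
open Finset

/-- There is no `x ∈ [0,1]` such that all three sums
`hᵢ(x) = ∑_{j ≡ i (mod 3), 0 ≤ j ≤ m} C(m,j)·x^j·(1-x)^{m-j}` equal `1/3`. -/
theorem stmt_4 (m : ℕ) (hm : 1 ≤ m) :
    ¬ ∃ x : ℝ, 0 ≤ x ∧ x ≤ 1 ∧
      (∀ i < 3, ∑ j ∈ (range (m + 1)).filter (fun j => j % 3 = i),
        (m.choose j : ℝ) * x ^ j * (1 - x) ^ (m - j) = 1 / 3) := by
  rintro ⟨x, hx0, hx1, h⟩
  set ω : ℂ := ⟨-1/2, Real.sqrt 3 / 2⟩ with hω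
  have h3 : (Real.sqrt 3) ^ 2 = 3 := Real.sq_sqrt (by norm_num)
  have hs3 : (Real.sqrt 3) ^ 3 = 3 * Real.sqrt 3 := by
    rw [pow_succ, h3]
  have hω3 : ω ^ 3 = 1 := by
    apply Complex.ext <;>
      simp [hω, pow_succ, Complex.mul_re, Complex.mul_im] <;> ring_nf <;> nlinarith [h3, hs3]
  have hsum3 : 1 + ω + ω ^ 2 = 0 := by
    apply Complex.ext <;>
      simp [hω, pow_two, Complex.mul_re, Complex.mul_im] <;> ring_nf <;> nlinarith [h3, hs3]
  set z : ℂ := ((1 - x : ℝ) : ℂ) + ω * (x : ℝ) with hz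
  have hfib : ∀ i ∈ range 3,
      ∑ j ∈ (range (m + 1)).filter (fun j => j % 3 = i),
        (ω * (x:ℝ)) ^ j * ((1 - x : ℝ) : ℂ) ^ (m - j) * (m.choose j : ℂ)
        = ω ^ i * (1 / 3) := by
    intro i hi
    have hi3 := mem_range.mp hi
    have step : ∀ j ∈ (range (m + 1)).filter (fun j => j % 3 = i),
        (ω * (x:ℝ)) ^ j * ((1 - x : ℝ) : ℂ) ^ (m - j) * (m.choose j : ℂ)
        = ω ^ i * ((m.choose j : ℝ) * x ^ j * (1 - x) ^ (m - j) : ℝ) := by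
      intro j hj
      have hjm : j % 3 = i := (mem_filter.mp hj).2
      have hωj : ω ^ j = ω ^ i := by
        conv_lhs => rw [← Nat.div_add_mod j 3]
        rw [pow_add, pow_mul, hω3, one_pow, one_mul, hjm]
      rw [mul_pow, hωj]
      push_cast
      ring
    rw [Finset.sum_congr rfl step, ← Finset.mul_sum, ← Complex.ofReal_sum]
    have := h i hi3
    rw [this]
    norm_num
  have key : z ^ m = 0 := by
    rw [hz, add_comm, add_pow]
    have hall : (range (m+1)).filter (fun j => j % 3 ∈ range 3) = range (m+1) :=
      filter_true_of_mem (by intro j _; simp [Nat.mod_lt])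
    rw [← hall, ← Finset.sum_fiberwise_eq_sum_filter (range (m+1)) (range 3) (fun j => j % 3)
      (fun j => (ω * (x:ℝ)) ^ j * ((1 - x : ℝ) : ℂ) ^ (m - j) * (m.choose j : ℂ))]
    rw [Finset.sum_congr rfl hfib, ← Finset.sum_mul]
    have : ∑ i ∈ range 3, ω ^ i = 1 + ω + ω ^ 2 := by
      simp [Finset.sum_range_succ]
    rw [this, hsum3, zero_mul]
  have hz0 : z = 0 := pow_eq_zero_iff (Nat.one_le_iff_ne_zero.mp hm) |>.mp key
  have him : z.im = Real.sqrt 3 / 2 * x := by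
    simp [hz, hω, Complex.add_im, Complex.mul_im]
  have hx : x = 0 := by
    have : Real.sqrt 3 / 2 * x = 0 := by rw [← him, hz0]; simp
    have hs : Real.sqrt 3 > 0 := Real.sqrt_pos.mpr (by norm_num)
    rcases mul_eq_zero.mp this with h' | h'
    · exact absurd h' (by positivity)
    · exact h'
  have hre : z.re = 1 := by
    simp [hz, hω, Complex.add_re, Complex.mul_re, hx]
  rw [hz0] at hre
  simp at hre
end

section
/- For every integer m ≥ 1, min{h₀(1/2), h₁(1/2), h₂(1/2)} = ⌊2^m/3⌋ · 2^{-m}, where hᵢ(x) = Σ_{j ≡ i (mod 3), 0 ≤ j ≤ m} C(m,j)·x^j·(1-x)^{m-j}. -/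
open Finset

def Sb (i m : ℕ) : ℕ := ∑ j ∈ (range (m + 1)).filter (fun j => j % 3 = i), m.choose j

lemma Sb_rec (m i : ℕ) (hi : i < 3) : Sb i (m + 1) = Sb i m + Sb ((i + 2) % 3) m := by
  unfold Sb
  rw [Finset.sum_filter, Finset.sum_filter, Finset.sum_filter, Finset.sum_range_succ']
  have h1 : ∀ j, (if (j + 1) % 3 = i then (m+1).choose (j+1) else 0)
      = (if j % 3 = (i + 2) % 3 then m.choose j else 0)
        + (if (j + 1) % 3 = i then m.choose (j+1) else 0) := by
    intro j
    have hiff : (j + 1) % 3 = i ↔ j % 3 = (i + 2) % 3 := by omega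
    rw [Nat.choose_succ_succ]
    by_cases h : (j + 1) % 3 = i
    · simp [h, hiff.mp h]
    · have h' : ¬ j % 3 = (i + 2) % 3 := fun hh => h (hiff.mpr hh)
      simp [h, h']
  simp only [h1, Finset.sum_add_distrib]
  have h2 : (∑ j ∈ range (m + 1), if (j + 1) % 3 = i then m.choose (j+1) else 0)
      + (if 0 % 3 = i then m.choose 0 else 0)
      = ∑ j ∈ range (m + 2), if j % 3 = i then m.choose j else 0 :=
    (Finset.sum_range_succ' (fun j => if j % 3 = i then m.choose j else 0) (m+1)).symm
  have h3 : (∑ j ∈ range (m + 2), if j % 3 = i then m.choose j else 0)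
      = ∑ j ∈ range (m + 1), if j % 3 = i then m.choose j else 0 := by
    rw [Finset.sum_range_succ, Nat.choose_succ_self]
    simp
  simp only [Nat.choose_zero_right] at h2 h3 ⊢
  omega

def dd : ℕ → ℤ × ℤ × ℤ
  | 0 => (2, -1, -1)
  | 1 => (1, 1, -2)
  | 2 => (-1, 2, -1)
  | 3 => (-2, 1, 1)
  | 4 => (-1, -1, 2)
  | _ => (1, -2, 1)

lemma Sb_key : ∀ m, 1 ≤ m →
    3 * (Sb 0 m : ℤ) = 2 ^ m + (dd (m % 6)).1 ∧
    3 * (Sb 1 m : ℤ) = 2 ^ m + (dd (m % 6)).2.1 ∧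
    3 * (Sb 2 m : ℤ) = 2 ^ m + (dd (m % 6)).2.2 := by
  intro m hm
  induction m, hm using Nat.le_induction with
  | base => refine ⟨?_, ?_, ?_⟩ <;> simp [Sb, dd, Finset.sum_filter, Finset.sum_range_succ]
  | succ m hm ih =>
    obtain ⟨h0, h1, h2⟩ := ih
    have r0 : Sb 0 (m + 1) = Sb 0 m + Sb 2 m := Sb_rec m 0 (by norm_num)
    have r1 : Sb 1 (m + 1) = Sb 1 m + Sb 0 m := Sb_rec m 1 (by norm_num)
    have r2 : Sb 2 (m + 1) = Sb 2 m + Sb 1 m := Sb_rec m 2 (by norm_num)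
    have hr : (m + 1) % 6 = (m % 6 + 1) % 6 := by omega
    have h6 : m % 6 = 0 ∨ m % 6 = 1 ∨ m % 6 = 2 ∨ m % 6 = 3 ∨ m % 6 = 4 ∨ m % 6 = 5 := by
      omega
    rcases h6 with h | h | h | h | h | h <;>
      rw [h] at h0 h1 h2 <;> rw [hr, h] <;>
      refine ⟨?_, ?_, ?_⟩ <;>
      simp only [dd] at * <;>
      push_cast [r0, r1, r2, pow_succ] <;> linarith

lemma Sb_min (m : ℕ) (hm : 1 ≤ m) :
    min (min (Sb 0 m) (Sb 1 m)) (Sb 2 m) = 2 ^ m / 3 := by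
  obtain ⟨h0, h1, h2⟩ := Sb_key m hm
  have ht : ((2 ^ m : ℕ) : ℤ) = 2 ^ m := by push_cast; ring
  rw [← ht] at h0 h1 h2
  have h6 : m % 6 = 0 ∨ m % 6 = 1 ∨ m % 6 = 2 ∨ m % 6 = 3 ∨ m % 6 = 4 ∨ m % 6 = 5 := by
    omega
  rcases h6 with h | h | h | h | h | h <;>
    rw [h] at h0 h1 h2 <;> simp only [dd] at h0 h1 h2 <;> omega

/-- `min{h₀(1/2), h₁(1/2), h₂(1/2)} = ⌊2^m/3⌋ · 2^{-m}`, where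
`hᵢ(x) = ∑_{j ≡ i (mod 3), 0 ≤ j ≤ m} C(m,j)·x^j·(1-x)^{m-j}`. -/
theorem stmt_5 (m : ℕ) (hm : 1 ≤ m) :
    min (min (∑ j ∈ (range (m + 1)).filter (fun j => j % 3 = 0),
            (m.choose j : ℝ) * (1 / 2 : ℝ) ^ j * (1 - 1 / 2 : ℝ) ^ (m - j))
          (∑ j ∈ (range (m + 1)).filter (fun j => j % 3 = 1),
            (m.choose j : ℝ) * (1 / 2 : ℝ) ^ j * (1 - 1 / 2 : ℝ) ^ (m - j)))
        (∑ j ∈ (range (m + 1)).filter (fun j => j % 3 = 2),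
          (m.choose j : ℝ) * (1 / 2 : ℝ) ^ j * (1 - 1 / 2 : ℝ) ^ (m - j))
      = ((2 ^ m / 3 : ℕ) : ℝ) * ((2 : ℝ) ^ m)⁻¹ := by
  have hsum : ∀ i : ℕ, (∑ j ∈ (range (m + 1)).filter (fun j => j % 3 = i),
      (m.choose j : ℝ) * (1 / 2 : ℝ) ^ j * (1 - 1 / 2 : ℝ) ^ (m - j))
      = (Sb i m : ℝ) * ((2 : ℝ) ^ m)⁻¹ := by
    intro i
    unfold Sb
    rw [Nat.cast_sum, Finset.sum_mul]
    refine Finset.sum_congr rfl fun j hj => ?_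
    have hjm : j ≤ m := by
      simp only [Finset.mem_filter, Finset.mem_range] at hj
      omega
    have h12 : (1 - 1 / 2 : ℝ) = 1 / 2 := by norm_num
    rw [h12, mul_assoc, ← pow_add, Nat.add_sub_cancel' hjm, one_div, inv_pow]
  rw [hsum 0, hsum 1, hsum 2]
  have hc : (0 : ℝ) ≤ ((2 : ℝ) ^ m)⁻¹ := by positivity
  rw [← min_mul_of_nonneg _ _ hc, ← min_mul_of_nonneg _ _ hc]
  rw [← Nat.cast_min, ← Nat.cast_min, Sb_min m hm]
end

section
/- Let k ≥ 2, 0 ≤ ℓ ≤ k-1, j ∈ {0,...,ℓ+1}. Let I_j be a longest interval of consecutive integers [a,b] ⊆ [0,k] such that no i ∈ [a,b] satisfies i ≡ j (mod ℓ+2). Then min over j ∈ {0,...,ℓ+1} of |I_j| equals min{ℓ+1, ⌈k/2⌉}, where |I_j| = b - a + 1. -/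
open Finset

/-- The minimum over `j ∈ {0,…,ℓ+1}` of the maximum length of an interval
`[a,b] ⊆ [0,k]` avoiding the residue class `j (mod ℓ+2)` equals
`min{ℓ+1, ⌈k/2⌉}`. -/
theorem stmt_6 (k ℓ : ℕ) (hk : 2 ≤ k) (hℓ : ℓ ≤ k - 1) :
    (Finset.range (ℓ + 2)).inf' (Finset.nonempty_range_iff.mpr (by omega))
      (fun j => sSup {L : ℕ | ∃ a b : ℕ, a ≤ b ∧ b ≤ k ∧ L = b - a + 1 ∧
        ∀ i : ℕ, a ≤ i → i ≤ b → i % (ℓ + 2) ≠ j})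
      = min (ℓ + 1) ((k + 1) / 2) := by
  have hbdd : ∀ j : ℕ, BddAbove {L : ℕ | ∃ a b : ℕ, a ≤ b ∧ b ≤ k ∧ L = b - a + 1 ∧
      ∀ i : ℕ, a ≤ i → i ≤ b → i % (ℓ + 2) ≠ j} := by
    intro j
    exact ⟨k + 1, fun L hL => by obtain ⟨a, b, h1, h2, h3, _⟩ := hL; omega⟩
  apply le_antisymm
  · by_cases hcase : ℓ + 1 ≤ (k + 1) / 2
    · -- use j₀ = 0; the min is ℓ+1
      have h0 : (0 : ℕ) ∈ Finset.range (ℓ + 2) := by simp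
      refine le_trans (Finset.inf'_le _ h0) ?_
      apply csSup_le
      · refine ⟨1, 1, 1, le_rfl, by omega, by omega, fun i h1 h2 => ?_⟩
        have hi : i = 1 := by omega
        subst hi
        rw [Nat.mod_eq_of_lt (by omega)]
        omega
      · rintro L ⟨a, b, hab, hbk, hL, havoid⟩
        by_contra hcon
        push_neg at hcon
        have hmin : ℓ + 1 < L := by omega
        -- length ≥ ℓ+2, so [a,b] contains a multiple of ℓ+2
        have hlen : a + (ℓ + 2) - 1 ≤ b := by omega
        rcases Nat.eq_zero_or_pos (a % (ℓ + 2)) with h | h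
        · exact havoid a le_rfl hab h
        · set i := a + ((ℓ + 2) - a % (ℓ + 2)) with hi
          have ht : (ℓ + 2) * (a / (ℓ + 2)) + a % (ℓ + 2) = a := Nat.div_add_mod a (ℓ + 2)
          have hr : a % (ℓ + 2) < ℓ + 2 := Nat.mod_lt _ (by omega)
          have heq : i = (ℓ + 2) * (a / (ℓ + 2) + 1) := by
            rw [Nat.mul_add, Nat.mul_one]
            generalize (ℓ + 2) * (a / (ℓ + 2)) = t at ht ⊢
            omega
          have hmod : i % (ℓ + 2) = 0 := by rw [heq]; exact Nat.mul_mod_right _ _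
          exact havoid i (by omega) (by omega) hmod
    · -- use j₀ = (k+1)/2; the min is (k+1)/2, and k ≤ 2ℓ+... here (k+1)/2 ≤ ℓ
      push_neg at hcase
      have hj0 : (k + 1) / 2 ∈ Finset.range (ℓ + 2) := by
        rw [Finset.mem_range]; omega
      refine le_trans (Finset.inf'_le _ hj0) ?_
      apply csSup_le
      · refine ⟨1, 0, 0, le_rfl, by omega, by omega, fun i h1 h2 => ?_⟩
        have hi : i = 0 := by omega
        subst hi
        rw [Nat.zero_mod]
        omega
      · rintro L ⟨a, b, hab, hbk, hL, havoid⟩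
        by_contra hcon
        push_neg at hcon
        have hmem : a ≤ (k + 1) / 2 ∧ (k + 1) / 2 ≤ b := by omega
        exact havoid _ hmem.1 hmem.2 (Nat.mod_eq_of_lt (by omega))
  · apply Finset.le_inf'
    intro j hj
    rw [Finset.mem_range] at hj
    by_cases hjk : j + (ℓ + 2) ≤ k
    · -- interval [j+1, j+ℓ+1] has length ℓ+1 and avoids residue j
      refine le_trans (min_le_left _ _) (le_csSup (hbdd j) ?_)
      refine ⟨j + 1, j + ℓ + 1, by omega, by omega, by omega, fun i h1 h2 hmod => ?_⟩
      have hme : j % (ℓ + 2) = i % (ℓ + 2) := by rw [hmod, Nat.mod_eq_of_lt (by omega)]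
      have hdvd : (ℓ + 2) ∣ i - j := (Nat.modEq_iff_dvd' (by omega)).mp hme
      have := Nat.le_of_dvd (by omega) hdvd
      omega
    · push_neg at hjk
      by_cases h2j : k ≤ 2 * j
      · -- interval [0, j-1] has length j ≥ (k+1)/2
        refine le_trans (min_le_right _ _) (le_trans (show (k+1)/2 ≤ j by omega)
          (le_csSup (hbdd j) ?_))
        refine ⟨0, j - 1, by omega, by omega, by omega, fun i h1 h2 hmod => ?_⟩
        rw [Nat.mod_eq_of_lt (by omega)] at hmod
        omega
      · push_neg at h2j
        -- interval [j+1, k] has length k - j ≥ (k+1)/2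
        refine le_trans (min_le_right _ _) (le_trans (show (k+1)/2 ≤ k - j by omega)
          (le_csSup (hbdd j) ?_))
        refine ⟨j + 1, k, by omega, le_rfl, by omega, fun i h1 h2 hmod => ?_⟩
        have hme : j % (ℓ + 2) = i % (ℓ + 2) := by rw [hmod, Nat.mod_eq_of_lt (by omega)]
        have hdvd : (ℓ + 2) ∣ i - j := (Nat.modEq_iff_dvd' (by omega)).mp hme
        have := Nat.le_of_dvd (by omega) hdvd
        omega
end

section
/- Let k ≥ 2, 0 ≤ ℓ ≤ k-1, j ∈ {0,...,ℓ+1}, and suppose d ≥ max{k-ℓ, ⌊k/2⌋+1}. Let V = V₁ ∪ V₂ be a partition of an n-vertex set with both parts nonempty of size at least k, and let H be the k-graph on V whose edges are all k-sets e with |e ∩ V₁| ≡ j (mod ℓ+2). Then the minimum d-degree δ_d(H) = 0, i.e., there exists a d-set S of vertices contained in no edge of H. -/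
/-!
Put `a` vertices of the `d`-set `S` in `V₁` and the remaining `d - a` in `V₂`. Any `k`-edge `e ⊇ S`
then meets `V₁` in between `a` and `a + (k - d)` vertices, a window of `k - d + 1 ≤ ℓ + 1` consecutive
integers. Such a window can be chosen to miss the residue class of `j` modulo `ℓ + 2`: start it just
after `j % (ℓ + 2)` when this residue is at most `k - d`, and at `0` otherwise; the first choice
keeps `a ≤ d` because `d ≥ ⌊k/2⌋ + 1` forces `k - d < d`.
-/

open Finset

theorem Nat.mod_ne_of_lt_of_lt_add {m q r : ℕ} (h₁ : r < m) (h₂ : m < r + q) : m % q ≠ r := by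
  rcases lt_or_ge m q with hm | hm
  · rw [Nat.mod_eq_of_lt hm]
    omega
  · have := Nat.mod_le (m - q) q
    rw [Nat.mod_eq_sub_mod hm]
    omega

theorem Nat.exists_le_forall_mod_ne_of_window {q r w d : ℕ} (hw : w + 2 ≤ q)
    (hwd : w < d) : ∃ a ≤ d, ∀ m, a ≤ m → m ≤ a + w → m % q ≠ r := by
  rcases le_or_gt r w with hrw | hrw
  · exact ⟨r + 1, by omega, fun m h₁ h₂ => Nat.mod_ne_of_lt_of_lt_add (by omega) (by omega)⟩
  · refine ⟨0, Nat.zero_le d, fun m _ h₂ => ?_⟩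
    rw [Nat.mod_eq_of_lt (by omega)]
    omega

namespace Finset

variable {α : Type*} [DecidableEq α]

theorem card_inter_le_card_inter_add_card_sub {S e : Finset α} (V : Finset α) (hSe : S ⊆ e) :
    #(e ∩ V) ≤ #(S ∩ V) + (#e - #S) := by
  have hcover : e ∩ V ⊆ S ∩ V ∪ e \ S := fun x hx => by
    by_cases hxS : x ∈ S <;> simp_all
  calc #(e ∩ V) ≤ #(S ∩ V ∪ e \ S) := card_le_card hcover
    _ ≤ #(S ∩ V) + #(e \ S) := card_union_le _ _
    _ = #(S ∩ V) + (#e - #S) := by rw [card_sdiff_of_subset hSe]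

theorem exists_subset_union_card_eq_card_inter_eq {V₁ V₂ : Finset α} (hdisj : Disjoint V₁ V₂)
    {a d : ℕ} (had : a ≤ d) (ha : a ≤ #V₁) (hda : d - a ≤ #V₂) :
    ∃ S ⊆ V₁ ∪ V₂, #S = d ∧ #(S ∩ V₁) = a := by
  obtain ⟨A, hA, hAcard⟩ := exists_subset_card_eq ha
  obtain ⟨B, hB, hBcard⟩ := exists_subset_card_eq hda
  have hBV₁ : B ∩ V₁ = ∅ := disjoint_iff_inter_eq_empty.mp (hdisj.symm.mono_left hB)
  refine ⟨A ∪ B, union_subset_union hA hB, ?_, ?_⟩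
  · rw [card_union_of_disjoint (hdisj.mono hA hB), hAcard, hBcard]
    omega
  · rw [union_inter_distrib_right, inter_eq_left.mpr hA, hBV₁, union_empty, hAcard]

end Finset

theorem stmt_7_general {α : Type*} [DecidableEq α] (k ℓ j d : ℕ)
    (hd : max (k - ℓ) (k / 2 + 1) ≤ d) (hd' : d ≤ k - 1)
    (V₁ V₂ : Finset α) (hdisj : Disjoint V₁ V₂)
    (hV₁ : k ≤ V₁.card) (hV₂ : k ≤ V₂.card) :
    ∃ S : Finset α, S ⊆ V₁ ∪ V₂ ∧ S.card = d ∧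
      ∀ e : Finset α, e ⊆ V₁ ∪ V₂ → e.card = k →
        (e ∩ V₁).card % (ℓ + 2) = j % (ℓ + 2) → ¬ S ⊆ e := by
  obtain ⟨a, had, hwindow⟩ := Nat.exists_le_forall_mod_ne_of_window
    (r := j % (ℓ + 2)) (by omega : k - d + 2 ≤ ℓ + 2) (by omega : k - d < d)
  obtain ⟨S, hS, hScard, hSV₁⟩ :=
    exists_subset_union_card_eq_card_inter_eq hdisj had (by omega) (by omega)
  refine ⟨S, hS, hScard, fun e _ hecard hemod hSe => hwindow _ ?_ ?_ hemod⟩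
  · exact hSV₁ ▸ card_le_card (inter_subset_inter_right hSe)
  · have := card_inter_le_card_inter_add_card_sub V₁ hSe
    omega

/-- If `d ≥ max{k-ℓ, ⌊k/2⌋+1}` then the divisibility-barrier `k`-graph on the
bipartition `V₁ ∪ V₂` (edges: `k`-sets `e` with `|e ∩ V₁| ≡ j (mod ℓ+2)`) has
minimum `d`-degree zero: some `d`-set lies in no edge. -/
theorem stmt_7 {α : Type*} [DecidableEq α] (k ℓ j d : ℕ)
    (hk : 2 ≤ k) (hℓ : ℓ ≤ k - 1) (hj : j ≤ ℓ + 1)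
    (hd : max (k - ℓ) (k / 2 + 1) ≤ d) (hd' : d ≤ k - 1)
    (V₁ V₂ : Finset α) (hdisj : Disjoint V₁ V₂)
    (hV₁ : k ≤ V₁.card) (hV₂ : k ≤ V₂.card) :
    ∃ S : Finset α, S ⊆ V₁ ∪ V₂ ∧ S.card = d ∧
      ∀ e : Finset α, e ⊆ V₁ ∪ V₂ → e.card = k →
        (e ∩ V₁).card % (ℓ + 2) = j % (ℓ + 2) → ¬ S ⊆ e :=
  stmt_7_general k ℓ j d hd hd' V₁ V₂ hdisj hV₁ hV₂
end

section
/- Let k ≥ 6 and let H be an n-vertex k-graph with δ_{k-2}(H) ≥ c·n² for some c > 0 and n sufficiently large (n ≥ n₀(k,c)). Then for every set S of k+2 vertices, the number of S-absorbing edges in H is at least c³·n^k/(2·k!). -/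
/-
Split `S = T ∪ (S \ T)` with `#T = k - 2` and count tuples `(T', e₁, e₂, e)` in which `T'` is a
`(k - 6)`-subset of `V \ S`, `e₁ ⊇ T` avoids `(S \ T) ∪ T'`, `e₂ ⊇ (S \ T) ∪ T'` avoids `e₁`, and
`e ⊇ (e₁ \ S) ∪ (e₂ \ S)` avoids `S`. Each of `e₁, e₂, e` extends a `(k - 2)`-set while avoiding
at most `k + 2` vertices, so it has at least `c n² - (k + 2) n` choices, and there are
`≥ (n - 2k + 5)^(k - 6) / (k - 6)!` choices of `T'`. The last entry `e` is `S`-absorbing, with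
witnesses `e₁, e₂`, and determines the tuple once `e₁ \ S`, `e₂ \ S ⊆ e` and `T' ⊆ e₂ \ S` are
chosen: at most `C(k,2) C(k-2,2) C(k-4,2) = k! / (8 (k - 6)!)` tuples per absorbing edge.
For `n ≥ 4k²` and `c n ≥ 4k²` both `n - 2k + 5` and `c n² - (k + 2) n` lose at most a factor
`1 - 1/(2k)`, which costs at most `1/2` over `k - 3` factors.
-/

open Finset

lemma mul_le_card_sigma {ι : Type*} {κ : ι → Type*} {s : Finset ι} {t : ∀ i, Finset (κ i)}
    {a b : ℝ} (hb : 0 ≤ b) (hs : a ≤ #s) (ht : ∀ i ∈ s, b ≤ #(t i)) : a * b ≤ #(s.sigma t) := by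
  rw [card_sigma, Nat.cast_sum]
  calc a * b ≤ #s * b := by gcongr
    _ = #s • b := (nsmul_eq_mul _ _).symm
    _ ≤ ∑ i ∈ s, (#(t i) : ℝ) := card_nsmul_le_sum _ _ _ ht

lemma pow_le_factorial_mul_card_powersetCard {α : Type*} (s : Finset α) (j : ℕ) :
    (#s + 1 - j) ^ j ≤ j.factorial * #(s.powersetCard j) := by
  rw [card_powersetCard, ← Nat.descFactorial_eq_factorial_mul_choose]
  exact Nat.pow_sub_le_descFactorial _ _

section Extensions

variable {α : Type*} [DecidableEq α]

def extensions (E : Finset (Finset α)) (T B : Finset α) : Finset (Finset α) :=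
  {e ∈ E | T ⊆ e ∧ Disjoint e B}

lemma mem_extensions {E : Finset (Finset α)} {T B e : Finset α} :
    e ∈ extensions E T B ↔ e ∈ E ∧ T ⊆ e ∧ Disjoint e B :=
  mem_filter

lemma card_filter_superset_le {E : Finset (Finset α)} {U V : Finset α}
    (hE : ∀ e ∈ E, e ⊆ V ∧ #e = #U + 1) : #{e ∈ E | U ⊆ e} ≤ #V := by
  calc #{e ∈ E | U ⊆ e} ≤ #(V.powersetCard 1) := by
        refine card_le_card_of_injOn (· \ U) (fun e he => ?_) (fun e he f hf hef => ?_)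
        · rw [coe_filter, Set.mem_ofPred_eq] at he
          obtain ⟨heV, hcard⟩ := hE e he.1
          rw [mem_coe, mem_powersetCard, card_sdiff_of_subset he.2]
          exact ⟨sdiff_subset.trans heV, by omega⟩
        · rw [coe_filter, Set.mem_ofPred_eq] at he hf
          rw [← sdiff_union_of_subset he.2, ← sdiff_union_of_subset hf.2]
          exact congrArg (· ∪ U) hef
    _ = #V := by rw [card_powersetCard, Nat.choose_one_right]

/-- An edge through `T` that meets `B` contains `insert v T` for some `v ∈ B`, and there are at
most `#V` such edges for each `v`. -/
lemma card_filter_superset_le_card_extensions_add {E : Finset (Finset α)} {T B V : Finset α}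
    (hE : ∀ e ∈ E, e ⊆ V ∧ #e = #T + 2) (hTB : Disjoint T B) :
    #{e ∈ E | T ⊆ e} ≤ #(extensions E T B) + #B * #V := by
  have hcover : {e ∈ E | T ⊆ e} ⊆
      extensions E T B ∪ B.biUnion fun v => {e ∈ E | insert v T ⊆ e} := by
    intro e he
    rw [mem_filter] at he
    rcases disjoint_or_nonempty_inter e B with hd | ⟨v, hv⟩
    · exact mem_union_left _ (mem_extensions.2 ⟨he.1, he.2, hd⟩)
    · rw [mem_inter] at hv
      exact mem_union_right _ <| mem_biUnion.2
        ⟨v, hv.2, mem_filter.2 ⟨he.1, insert_subset hv.1 he.2⟩⟩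
  have hfiber : ∀ v ∈ B, #{e ∈ E | insert v T ⊆ e} ≤ #V := fun v hv =>
    card_filter_superset_le fun e he => by
      rw [card_insert_of_notMem (disjoint_right.1 hTB hv)]
      exact hE e he
  calc #{e ∈ E | T ⊆ e}
      ≤ #(extensions E T B ∪ B.biUnion fun v => {e ∈ E | insert v T ⊆ e}) := card_le_card hcover
    _ ≤ #(extensions E T B) + #(B.biUnion fun v => {e ∈ E | insert v T ⊆ e}) := card_union_le _ _
    _ ≤ #(extensions E T B) + #B * #V := by gcongr; exact card_biUnion_le_card_mul _ _ _ hfiber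

lemma sub_mul_le_card_extensions {E : Finset (Finset α)} {V T B : Finset α} {c : ℝ} {k n : ℕ}
    (hV : #V = n) (hk : 2 ≤ k) (hE : ∀ e ∈ E, e ⊆ V ∧ #e = k)
    (hdeg : ∀ T ⊆ V, #T = k - 2 → c * (n : ℝ) ^ 2 ≤ #{e ∈ E | T ⊆ e})
    (hTV : T ⊆ V) (hT : #T = k - 2) (hTB : Disjoint T B) :
    c * n ^ 2 - #B * n ≤ #(extensions E T B) := by
  have hcover := card_filter_superset_le_card_extensions_add
    (fun e he => ⟨(hE e he).1, by rw [(hE e he).2, hT]; omega⟩) hTB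
  rw [hV] at hcover
  have : (#{e ∈ E | T ⊆ e} : ℝ) ≤ #(extensions E T B) + #B * n := by exact_mod_cast hcover
  linarith [hdeg T hTV hT]

lemma inter_eq_of_subset_of_disjoint_sdiff {S T e : Finset α} (hTS : T ⊆ S) (hTe : T ⊆ e)
    (he : Disjoint e (S \ T)) : e ∩ S = T := by
  refine subset_antisymm (fun x hx => ?_) (subset_inter hTe hTS)
  rw [mem_inter] at hx
  by_contra hxT
  exact disjoint_left.1 he hx.1 (mem_sdiff.2 ⟨hx.2, hxT⟩)

lemma inter_eq_sdiff_of_sdiff_subset {S e e' : Finset α} (he' : e' \ S ⊆ e) (he : Disjoint e S) :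
    e' ∩ e = e' \ S := by
  refine subset_antisymm (fun x hx => ?_) (subset_inter sdiff_subset he')
  rw [mem_inter] at hx
  exact mem_sdiff.2 ⟨hx.1, disjoint_left.1 he hx.2⟩

def subsetTriples (e : Finset α) (a b c : ℕ) :
    Finset ((_ : Finset α) × (_ : Finset α) × Finset α) :=
  (e.powersetCard a).sigma fun A => ((e \ A).powersetCard b).sigma fun B => B.powersetCard c

lemma card_subsetTriples (e : Finset α) (a b c : ℕ) :
    #(subsetTriples e a b c) = (#e).choose a * ((#e - a).choose b * b.choose c) := by
  rw [subsetTriples, card_sigma, sum_const_nat fun A hA => ?_, card_powersetCard]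
  rw [mem_powersetCard] at hA
  rw [card_sigma, sum_const_nat fun B hB => ?_, card_powersetCard, card_sdiff_of_subset hA.1, hA.2]
  rw [card_powersetCard, (mem_powersetCard.1 hB).2]

end Extensions

lemma factorial_eq_eight_mul_choose_mul {k : ℕ} (hk : 6 ≤ k) :
    k.factorial =
      8 * (k.choose 2 * ((k - 2).choose (k - 4) * (k - 4).choose (k - 6)) * (k - 6).factorial) := by
  have h₁ := Nat.choose_mul_factorial_mul_factorial (show 2 ≤ k by omega)
  have h₂ := Nat.choose_mul_factorial_mul_factorial (show k - 4 ≤ k - 2 by omega)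
  have h₃ := Nat.choose_mul_factorial_mul_factorial (show k - 6 ≤ k - 4 by omega)
  rw [show k - 2 - (k - 4) = 2 by omega] at h₂
  rw [show k - 4 - (k - 6) = 2 by omega] at h₃
  rw [← h₁, ← h₂, ← h₃, Nat.factorial_two]
  ring

lemma half_le_one_sub_inv_pow {k m : ℕ} (hm : m ≤ k) : (1 : ℝ) / 2 ≤ (1 - 1 / (2 * k)) ^ m := by
  rcases Nat.eq_zero_or_pos k with rfl | hk₀
  · rw [Nat.le_zero.1 hm, pow_zero]; norm_num
  have hk : (1 : ℝ) ≤ k := by exact_mod_cast hk₀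
  have hinv : 1 / (2 * (k : ℝ)) ≤ 1 / 2 := by gcongr; linarith
  have hmk : (m : ℝ) * (1 / (2 * k)) ≤ 1 / 2 :=
    calc (m : ℝ) * (1 / (2 * k)) ≤ k * (1 / (2 * k)) := by gcongr
      _ = 1 / 2 := by field_simp
  calc (1 : ℝ) / 2 ≤ 1 + m * -(1 / (2 * k)) := by linarith
    _ ≤ (1 + -(1 / (2 * k))) ^ m := one_add_mul_le_pow (by linarith) m
    _ = (1 - 1 / (2 * k)) ^ m := by rw [← sub_eq_add_neg]

/-- With `u = 1 - 1/(2k)`, the hypotheses give `u n ≤ x` and `u c n² ≤ c n² - (k + 2) n`, and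
`u ^ (k - 3) ≥ 1/2` by Bernoulli's inequality. -/
lemma cube_mul_pow_le {k n x : ℕ} {c y : ℝ} (hk : 6 ≤ k) (hn : 4 * k ^ 2 ≤ n)
    (hcn : 4 * k ^ 2 ≤ c * n) (hx : n + 5 ≤ x + 2 * k) (hy : (x : ℝ) ^ (k - 6) ≤ y) :
    c ^ 3 * n ^ k ≤ 2 * y * (c * n ^ 2 - (k + 2) * n) ^ 3 := by
  set u : ℝ := 1 - 1 / (2 * k) with hu
  have hk' : (6 : ℝ) ≤ k := by exact_mod_cast hk
  have hn' : 4 * (k : ℝ) ^ 2 ≤ n := by exact_mod_cast hn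
  have hx' : (n : ℝ) + 5 ≤ x + 2 * k := by exact_mod_cast hx
  have hc : 0 ≤ c := by
    by_contra! hc
    nlinarith [mul_nonpos_of_nonpos_of_nonneg hc.le (Nat.cast_nonneg (α := ℝ) n)]
  have hu0 : 0 ≤ u := by
    rw [hu, sub_nonneg, div_le_one (by positivity)]; linarith
  have hun : u * n ≤ x := by
    have : 2 * k ≤ n / (2 * (k : ℝ)) := by rw [le_div_iff₀ (by positivity)]; nlinarith
    have : u * n = n - n / (2 * k) := by rw [hu]; ring
    linarith
  have hD : u * (c * n ^ 2) ≤ c * n ^ 2 - (k + 2) * n := by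
    have : (k + 2) * n ≤ c * n ^ 2 / (2 * (k : ℝ)) := by
      rw [le_div_iff₀ (by positivity)]
      have hk2 : 0 ≤ 2 * (k : ℝ) ^ 2 - 4 * k := by nlinarith
      nlinarith [mul_le_mul_of_nonneg_right hcn (Nat.cast_nonneg (α := ℝ) n),
        mul_nonneg hk2 (Nat.cast_nonneg (α := ℝ) n)]
    have : u * (c * n ^ 2) = c * n ^ 2 - c * n ^ 2 / (2 * k) := by rw [hu]; ring
    linarith
  have hpow : 1 / 2 ≤ u ^ (k - 3) := half_le_one_sub_inv_pow (by omega)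
  clear_value u
  obtain ⟨j, rfl⟩ : ∃ j, k = j + 6 := ⟨k - 6, by omega⟩
  simp only [show j + 6 - 6 = j by omega, show j + 6 - 3 = j + 3 by omega] at hy hpow ⊢
  calc c ^ 3 * n ^ (j + 6) ≤ 2 * (u ^ (j + 3) * (c ^ 3 * n ^ (j + 6))) := by
        nlinarith [show 0 ≤ c ^ 3 * n ^ (j + 6) by positivity]
    _ = 2 * ((u * n) ^ j * (u * (c * n ^ 2)) ^ 3) := by ring
    _ ≤ 2 * (x ^ j * (c * n ^ 2 - (↑(j + 6) + 2) * n) ^ 3) := by gcongr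
    _ ≤ 2 * y * (c * n ^ 2 - (↑(j + 6) + 2) * n) ^ 3 := by
        rw [mul_assoc]
        gcongr
        exact pow_nonneg ((mul_nonneg hu0 (by positivity)).trans hD) 3

section Absorbing

variable {α : Type*} [DecidableEq α] {E : Finset (Finset α)} {V S T : Finset α} {k : ℕ}

abbrev IsAbsorbing (E : Finset (Finset α)) (k : ℕ) (S e : Finset α) : Prop :=
  Disjoint e S ∧ ∃ e₁ ∈ E, ∃ e₂ ∈ E, Disjoint e₁ e₂ ∧
    #(e₁ ∩ S) = k - 2 ∧ #(e₁ ∩ e) = 2 ∧ #(e₂ ∩ S) = 4 ∧ #(e₂ ∩ e) = k - 4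

def absorbingTuples (E : Finset (Finset α)) (V S T : Finset α) (k : ℕ) :
    Finset ((_ : Finset α) × (_ : Finset α) × (_ : Finset α) × Finset α) :=
  ((V \ S).powersetCard (k - 6)).sigma fun T' =>
    (extensions E T (S \ T ∪ T')).sigma fun e₁ =>
      (extensions E (S \ T ∪ T') e₁).sigma fun e₂ =>
        extensions E (e₁ \ S ∪ e₂ \ S) S

lemma mem_absorbingTuples {T' e₁ e₂ e : Finset α} :
    ⟨T', e₁, e₂, e⟩ ∈ absorbingTuples E V S T k ↔
      T' ∈ (V \ S).powersetCard (k - 6) ∧ e₁ ∈ extensions E T (S \ T ∪ T') ∧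
        e₂ ∈ extensions E (S \ T ∪ T') e₁ ∧ e ∈ extensions E (e₁ \ S ∪ e₂ \ S) S := by
  simp only [absorbingTuples, mem_sigma]

lemma absorbingPair_of_mem_extensions (hTS : T ⊆ S) (hT : #T = k - 2) (hS : #S = k + 2)
    (hk : 2 ≤ k) (hE : ∀ e ∈ E, #e = k) {T' e₁ e₂ : Finset α}
    (he₁ : e₁ ∈ extensions E T (S \ T ∪ T')) (he₂ : e₂ ∈ extensions E (S \ T ∪ T') e₁) :
    Disjoint e₁ e₂ ∧ e₁ ∩ S = T ∧ e₂ ∩ S = S \ T ∧ #(e₁ \ S) = 2 ∧ #(e₂ \ S) = k - 4 := by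
  rw [mem_extensions] at he₁ he₂
  have h₁ : e₁ ∩ S = T :=
    inter_eq_of_subset_of_disjoint_sdiff hTS he₁.2.1 (disjoint_union_right.1 he₁.2.2).1
  have h₂ : e₂ ∩ S = S \ T := by
    refine inter_eq_of_subset_of_disjoint_sdiff sdiff_subset (subset_union_left.trans he₂.2.1) ?_
    rw [Finset.sdiff_sdiff_eq_self hTS]
    exact disjoint_of_subset_right he₁.2.1 he₂.2.2
  have hc₁ := card_sdiff_add_card_inter e₁ S
  have hc₂ := card_sdiff_add_card_inter e₂ S
  rw [h₁, hE e₁ he₁.1] at hc₁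
  rw [h₂, hE e₂ he₂.1, card_sdiff_of_subset hTS] at hc₂
  exact ⟨he₂.2.2.symm, h₁, h₂, by omega, by omega⟩

lemma mul_pow_three_le_card_absorbingTuples {D : ℝ} (hSV : S ⊆ V) (hTS : T ⊆ S) (hT : #T = k - 2)
    (hS : #S = k + 2) (hk : 6 ≤ k) (hE : ∀ e ∈ E, e ⊆ V ∧ #e = k)
    (hext : ∀ T₀ B, T₀ ⊆ V → #T₀ = k - 2 → Disjoint T₀ B → #B ≤ k + 2 →
      D ≤ #(extensions E T₀ B)) :
    #((V \ S).powersetCard (k - 6)) * D ^ 3 ≤ #(absorbingTuples E V S T k) := by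
  rcases lt_or_ge D 0 with hD | hD
  · have : #((V \ S).powersetCard (k - 6)) * D ^ 3 ≤ 0 :=
      mul_nonpos_of_nonneg_of_nonpos (Nat.cast_nonneg _) (Odd.pow_nonpos (by decide) hD.le)
    exact this.trans (Nat.cast_nonneg _)
  rw [show D ^ 3 = D * (D * D) by ring]
  refine mul_le_card_sigma (by positivity) le_rfl fun T' hT' => ?_
  rw [mem_powersetCard, subset_sdiff] at hT'
  obtain ⟨⟨hT'V, hT'S⟩, hT'⟩ := hT'
  have hTU : Disjoint T (S \ T ∪ T') :=
    disjoint_union_right.2 ⟨disjoint_sdiff, disjoint_of_subset_left hTS hT'S.symm⟩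
  have hU : #(S \ T ∪ T') = k - 2 := by
    rw [card_union_of_disjoint (disjoint_of_subset_left sdiff_subset hT'S.symm),
      card_sdiff_of_subset hTS]
    omega
  refine mul_le_card_sigma (mul_nonneg hD hD)
    (hext _ _ (hTS.trans hSV) hT hTU (by omega)) fun e₁ he₁ => ?_
  have he₁E := (mem_extensions.1 he₁).1
  refine mul_le_card_sigma hD (hext _ _ (union_subset (sdiff_subset.trans hSV) hT'V) hU
    (mem_extensions.1 he₁).2.2.symm (by rw [(hE e₁ he₁E).2]; omega)) fun e₂ he₂ => ?_
  have he₂E := (mem_extensions.1 he₂).1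
  obtain ⟨h₁₂, -, -, hc₁, hc₂⟩ :=
    absorbingPair_of_mem_extensions hTS hT hS (by omega) (fun e he => (hE e he).2) he₁ he₂
  refine hext _ _ ?_ ?_ (disjoint_union_left.2 ⟨sdiff_disjoint, sdiff_disjoint⟩) hS.le
  · exact union_subset (sdiff_subset.trans (hE e₁ he₁E).1) (sdiff_subset.trans (hE e₂ he₂E).1)
  · rw [card_union_of_disjoint (disjoint_of_subset_left sdiff_subset
      (disjoint_of_subset_right sdiff_subset h₁₂)), hc₁, hc₂]
    omega

lemma isAbsorbing_of_mem_absorbingTuples (hTS : T ⊆ S) (hT : #T = k - 2) (hS : #S = k + 2)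
    (hk : 2 ≤ k) (hE : ∀ e ∈ E, #e = k) {T' e₁ e₂ e : Finset α}
    (hp : ⟨T', e₁, e₂, e⟩ ∈ absorbingTuples E V S T k) : IsAbsorbing E k S e := by
  obtain ⟨-, he₁, he₂, he⟩ := mem_absorbingTuples.1 hp
  obtain ⟨h₁₂, h₁, h₂, hc₁, hc₂⟩ := absorbingPair_of_mem_extensions hTS hT hS hk hE he₁ he₂
  obtain ⟨-, hW, heS⟩ := mem_extensions.1 he
  refine ⟨heS, e₁, (mem_extensions.1 he₁).1, e₂, (mem_extensions.1 he₂).1, h₁₂, ?_, ?_, ?_, ?_⟩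
  · rw [h₁, hT]
  · rw [inter_eq_sdiff_of_sdiff_subset (subset_union_left.trans hW) heS, hc₁]
  · rw [h₂, card_sdiff_of_subset hTS]; omega
  · rw [inter_eq_sdiff_of_sdiff_subset (subset_union_right.trans hW) heS, hc₂]

/-- A tuple is determined by its last entry `e` together with `e₁ \ S`, `e₂ \ S` and `T'`, which
are nested subsets of `e`. -/
lemma card_filter_absorbingTuples_le (hTS : T ⊆ S) (hT : #T = k - 2) (hS : #S = k + 2)
    (hk : 2 ≤ k) (hE : ∀ e ∈ E, #e = k) (e : Finset α) :
    #{p ∈ absorbingTuples E V S T k | p.2.2.2 = e} ≤ #(subsetTriples e 2 (k - 4) (k - 6)) := by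
  refine card_le_card_of_injOn (fun p => ⟨p.2.1 \ S, p.2.2.1 \ S, p.1⟩) ?_ ?_
  · rintro ⟨T', e₁, e₂, e'⟩ hp
    simp only [mem_coe, mem_filter] at hp
    obtain ⟨hp, rfl⟩ := hp
    obtain ⟨hT', he₁, he₂, he⟩ := mem_absorbingTuples.1 hp
    obtain ⟨h₁₂, -, -, hc₁, hc₂⟩ := absorbingPair_of_mem_extensions hTS hT hS hk hE he₁ he₂
    have hW := (mem_extensions.1 he).2.1
    rw [mem_powersetCard, subset_sdiff] at hT'
    simp only [subsetTriples, mem_coe, mem_sigma, mem_powersetCard]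
    refine ⟨⟨subset_union_left.trans hW, hc₁⟩,
      ⟨subset_sdiff.2 ⟨subset_union_right.trans hW, ?_⟩, hc₂⟩,
      subset_sdiff.2 ⟨(mem_extensions.1 he₂).2.1.trans' subset_union_right, hT'.1.2⟩, hT'.2⟩
    exact (disjoint_of_subset_left sdiff_subset (disjoint_of_subset_right sdiff_subset h₁₂)).symm
  · rintro ⟨T', e₁, e₂, e'⟩ hp ⟨U', f₁, f₂, f'⟩ hq hpq
    simp only [mem_coe, mem_filter] at hp hq
    obtain ⟨hp, rfl⟩ := hp
    obtain ⟨hq, rfl⟩ := hq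
    obtain ⟨-, he₁, he₂, -⟩ := mem_absorbingTuples.1 hp
    obtain ⟨-, hf₁, hf₂, -⟩ := mem_absorbingTuples.1 hq
    obtain ⟨-, he₁S, he₂S, -⟩ := absorbingPair_of_mem_extensions hTS hT hS hk hE he₁ he₂
    obtain ⟨-, hf₁S, hf₂S, -⟩ := absorbingPair_of_mem_extensions hTS hT hS hk hE hf₁ hf₂
    simp only [Sigma.mk.inj_iff, heq_eq_eq] at hpq
    obtain ⟨h₁, h₂, rfl⟩ := hpq
    rw [← sdiff_union_inter e₁ S, ← sdiff_union_inter f₁ S, he₁S, hf₁S, h₁,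
      ← sdiff_union_inter e₂ S, ← sdiff_union_inter f₂ S, he₂S, hf₂S, h₂]

lemma card_absorbingTuples_le (hTS : T ⊆ S) (hT : #T = k - 2) (hS : #S = k + 2) (hk : 2 ≤ k)
    (hE : ∀ e ∈ E, #e = k) :
    #(absorbingTuples E V S T k) ≤
      k.choose 2 * ((k - 2).choose (k - 4) * (k - 4).choose (k - 6)) *
        #{e ∈ E | IsAbsorbing E k S e} := by
  refine card_le_mul_card_image_of_maps_to (f := fun p => p.2.2.2) ?_ _ fun e he => ?_
  · rintro ⟨T', e₁, e₂, e⟩ hp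
    exact mem_filter.2 ⟨(mem_extensions.1 (mem_absorbingTuples.1 hp).2.2.2).1,
      isAbsorbing_of_mem_absorbingTuples hTS hT hS hk hE hp⟩
  exact (card_filter_absorbingTuples_le hTS hT hS hk hE e).trans_eq
    (by rw [card_subsetTriples, hE e (mem_filter.1 he).1])

end Absorbing

open Classical in
/-- For `k ≥ 6` and `c > 0`, for all sufficiently large `n`: in every `n`-vertex
`k`-graph `H` with `δ_{k-2}(H) ≥ c·n²`, every `(k+2)`-set `S` of vertices has at
least `c³·n^k/(2·k!)` `S`-absorbing edges. An edge `e` disjoint from `S` is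
`S`-absorbing if there are disjoint edges `e₁, e₂` with `|e₁ ∩ S| = k-2`,
`|e₁ ∩ e| = 2`, `|e₂ ∩ S| = 4`, `|e₂ ∩ e| = k-4`. -/
theorem stmt_19 (k : ℕ) (hk : 6 ≤ k) (c : ℝ) (hc : 0 < c) :
    ∃ n₀ : ℕ, ∀ n : ℕ, n₀ ≤ n →
      ∀ (α : Type) (_ : DecidableEq α) (V : Finset α) (E : Finset (Finset α)),
        V.card = n →
        (∀ e ∈ E, e ⊆ V ∧ e.card = k) →
        (∀ T ⊆ V, T.card = k - 2 → c * (n : ℝ) ^ 2 ≤ ((E.filter (fun e => T ⊆ e)).card : ℝ)) →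
        ∀ S ⊆ V, S.card = k + 2 →
          c ^ 3 * (n : ℝ) ^ k / (2 * (k.factorial : ℝ)) ≤
            ((E.filter (fun e => Disjoint e S ∧
              ∃ e₁ ∈ E, ∃ e₂ ∈ E, Disjoint e₁ e₂ ∧
                (e₁ ∩ S).card = k - 2 ∧ (e₁ ∩ e).card = 2 ∧
                (e₂ ∩ S).card = 4 ∧ (e₂ ∩ e).card = k - 4)).card : ℝ) := by
  refine ⟨⌈4 * (k : ℝ) ^ 2 / c⌉₊ + 4 * k ^ 2, fun n hn α _ V E hV hE hdeg S hSV hS => ?_⟩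
  have hcn : 4 * (k : ℝ) ^ 2 ≤ c * n := by
    rw [← div_le_iff₀' hc]
    exact Nat.ceil_le.1 (by omega)
  obtain ⟨T, hTS, hT⟩ := exists_subset_card_eq (show k - 2 ≤ #S by omega)
  have hext : ∀ T₀ B, T₀ ⊆ V → #T₀ = k - 2 → Disjoint T₀ B → #B ≤ k + 2 →
      c * n ^ 2 - (k + 2) * n ≤ #(extensions E T₀ B) := fun T₀ B hT₀V hT₀ hT₀B hB =>
    (sub_le_sub_left (mul_le_mul_of_nonneg_right (by exact_mod_cast hB) n.cast_nonneg) _).trans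
      (sub_mul_le_card_extensions hV (by omega) hE hdeg hT₀V hT₀ hT₀B)
  have hP := pow_le_factorial_mul_card_powersetCard (V \ S) (k - 6)
  rw [card_sdiff_of_subset hSV, hV, hS] at hP
  have harith := cube_mul_pow_le (x := n - (k + 2) + 1 - (k - 6)) hk (by omega) hcn (by omega)
    (show (_ : ℝ) ≤ ((k - 6).factorial * #((V \ S).powersetCard (k - 6)) : ℕ) by exact_mod_cast hP)
  have hlow := mul_pow_three_le_card_absorbingTuples hSV hTS hT hS hk hE hext
  have hup := card_absorbingTuples_le (V := V) hTS hT hS (by omega) fun e he => (hE e he).2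
  rw [div_le_iff₀ (by positivity), factorial_eq_eight_mul_choose_mul hk]
  have hcount := mul_le_mul_of_nonneg_left (hlow.trans (Nat.cast_le.2 hup))
    (by positivity : (0 : ℝ) ≤ 2 * (k - 6).factorial)
  push_cast at harith hcount ⊢
  nlinarith [show (0 : ℝ) ≤ (k - 6).factorial * (k.choose 2 * ((k - 2).choose (k - 4) *
    (k - 4).choose (k - 6))) * #{e ∈ E | IsAbsorbing E k S e} by positivity]
end
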